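/- For odd powers h = 2p+1, the trace of (RC_n)^{2p+1} equals n^{-(2p+1)/2} Σ_{i=1}^n Σ over A_{p,i} of X_{j_1} ⋯ X_{j_{2p+1}}, where A_{p,i} = {(j_1,...,j_{2p+1}) ∈ {1,...,n}^{2p+1} : Σ_{k=1}^{2p+1} (-1)^k j_k ≡ 2i-1 (mod n)}. -/

import Mathlib

open Finset
open scoped Fin.CommRing Fin.NatCast Fin.IntCast

private lemma tele {R : Type*} [CommRing R] (G : ℕ → R) (m : ℕ) :
    ∑ t ∈ Finset.range m, (-1 : R) ^ t * (G t + G (t + 1)) = G 0 - (-1) ^ m * G m := by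
  induction m with
  | zero => simp
  | succ m ih => rw [Finset.sum_range_succ, ih, pow_succ]; ring

private lemma finIntCast_eq_zero_iff {n : ℕ} [NeZero n] (z : ℤ) :
    ((z : ℤ) : Fin n) = 0 ↔ (n : ℤ) ∣ z := by
  constructor
  · intro h
    have hn0 : (0 : ℤ) < (n : ℤ) := by exact_mod_cast Nat.pos_of_ne_zero (NeZero.ne n)
    have h0 : (0 : ℤ) ≤ z % n := Int.emod_nonneg z (by omega)
    have h1 : z % n < n := Int.emod_lt_of_pos z hn0
    have hz : ((z : ℤ) : Fin n) = ((z % n : ℤ) : Fin n) := by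
      conv_lhs => rw [← Int.mul_ediv_add_emod z n]
      push_cast [Fin.natCast_self]
      ring
    have hz2 : ((z % n : ℤ) : Fin n) = (((z % n).toNat : ℕ) : Fin n) := by
      conv_lhs => rw [← Int.toNat_of_nonneg h0]
      exact Int.cast_natCast _
    have hlt : (z % n).toNat < n := by omega
    have he : (((z % n).toNat : ℕ) : Fin n) = (0 : Fin n) := by rw [← hz2, ← hz, h]
    have hv := congrArg Fin.val he
    rw [Fin.val_cast_of_lt hlt] at hv
    have : z % n = 0 := by simp at hv; omega
    exact Int.dvd_of_emod_eq_zero this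
  · rintro ⟨q, rfl⟩
    push_cast [Fin.natCast_self]
    ring

private lemma cond_iff {n p : ℕ} [NeZero n] (i : Fin n) (j : Fin (2 * p + 1) → Fin n) :
    ((n : ℤ) ∣ (∑ k : Fin (2 * p + 1), (-1) ^ (k : ℕ) * ((j k : ℕ) : ℤ)) - 2 * (i : ℕ)) ↔
      ∑ k : Fin (2 * p + 1), (-1 : Fin n) ^ (k : ℕ) * j k = 2 * i := by
  rw [← finIntCast_eq_zero_iff]
  have hc : ((((∑ k : Fin (2 * p + 1), (-1) ^ (k : ℕ) * ((j k : ℕ) : ℤ)) - 2 * (i : ℕ)) : ℤ) : Fin n)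
      = (∑ k : Fin (2 * p + 1), (-1 : Fin n) ^ (k : ℕ) * j k) - 2 * i := by
    push_cast [Fin.cast_val_eq_self]
    ring
  rw [hc, sub_eq_zero]

private lemma sum_sum_filter {α β M : Type*} [Fintype α] [Fintype β] [AddCommMonoid M]
    (C : α → β → Prop) [∀ a b, Decidable (C a b)] (F : β → M) :
    ∑ i : α, ∑ j ∈ Finset.univ.filter (fun j => C i j), F j
      = ∑ x ∈ Finset.univ.filter (fun x : α × β => C x.1 x.2), F x.2 := by
  simp_rw [Finset.sum_filter]
  rw [← Fintype.sum_prod_type']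

private def cns {n m : ℕ} (i : Fin n) (f : Fin m → Fin n) : Fin (m + 1) → Fin n := Fin.cons i f

private lemma cns_zero {n m : ℕ} (i : Fin n) (f : Fin m → Fin n) : cns i f 0 = i := rfl

private lemma cns_succ {n m : ℕ} (i : Fin n) (f : Fin m → Fin n) (t : Fin m) :
    cns i f t.succ = f t := by simp [cns]

private lemma cns_snoc {n m : ℕ} (i x : Fin n) (f : Fin m → Fin n) (j : Fin (m + 1)) :
    cns i (Fin.snoc f x) j.castSucc = cns i f j := by
  have h : ∀ j : Fin (m + 1), Fin.cons (α := fun _ => Fin n) i (Fin.snoc f x) j.castSucc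
      = Fin.cons (α := fun _ => Fin n) i f j := by
    intro j
    refine Fin.cases ?_ ?_ j
    · simp
    · intro t
      rw [← Fin.succ_castSucc, Fin.cons_succ, Fin.cons_succ, Fin.snoc_castSucc]
  exact h j

private lemma cns_snoc_last {n m : ℕ} (i x : Fin n) (f : Fin m → Fin n) :
    cns i (Fin.snoc f x) (Fin.last (m + 1)) = x := by
  have h : Fin.cons (α := fun _ => Fin n) i (Fin.snoc f x) (Fin.last (m + 1)) = x := by
    rw [← Fin.succ_last, Fin.cons_succ, Fin.snoc_last]
  exact h

private lemma pow_apply_path {n : ℕ} (A : Matrix (Fin n) (Fin n) ℝ) (m : ℕ) :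
    ∀ (i j : Fin n), (A ^ (m + 1)) i j =
      ∑ f : Fin m → Fin n,
        (∏ k : Fin m, A (cns i f k.castSucc) (f k)) * A (cns i f (Fin.last m)) j := by
  induction m with
  | zero =>
    intro i j
    simp [pow_one, cns]
  | succ m ih =>
    intro i j
    rw [pow_succ, Matrix.mul_apply]
    simp_rw [ih, Finset.sum_mul]
    rw [← Fintype.sum_prod_type']
    refine Fintype.sum_equiv (Fin.snocEquiv (fun _ => Fin n)) _ _ ?_
    rintro ⟨x, f⟩
    have hsf : ((Fin.snocEquiv (fun _ => Fin n)) (x, f) : Fin (m + 1) → Fin n)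
        = Fin.snoc f x := rfl
    rw [hsf, Fin.prod_univ_castSucc]
    simp only [cns_snoc, Fin.snoc_castSucc, cns_snoc_last, Fin.snoc_last]

private lemma castSucc_add_one' {m : ℕ} (k : Fin m) : (k.castSucc : Fin (m + 1)) + 1 = k.succ := by
  ext
  rw [Fin.val_add_one_of_lt (Fin.castSucc_lt_last k)]
  simp

private lemma trace_pow_cycle {n : ℕ} (A : Matrix (Fin n) (Fin n) ℝ) (m : ℕ) :
    Matrix.trace (A ^ (m + 1)) =
      ∑ g : Fin (m + 1) → Fin n, ∏ k : Fin (m + 1), A (g k) (g (k + 1)) := by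
  rw [Matrix.trace]
  simp_rw [Matrix.diag_apply, pow_apply_path]
  rw [← Fintype.sum_prod_type']
  refine Fintype.sum_equiv (Fin.consEquiv (fun _ => Fin n)) _ _ ?_
  rintro ⟨i, f⟩
  have hcf : ((Fin.consEquiv (fun _ => Fin n)) (i, f) : Fin (m + 1) → Fin n) = cns i f := rfl
  rw [hcf, Fin.prod_univ_castSucc (f := fun k : Fin (m + 1) => A (cns i f k) (cns i f (k + 1)))]
  simp only [castSucc_add_one', cns_succ, Fin.last_add_one, cns_zero]

open Finset in
/-- Trace formula for odd powers of the reverse circulant matrix with entries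
`X j / √n` (0-indexed): `Tr (RC_n)^{2p+1} = n^{-(2p+1)/2} ∑_{i=1}^{n} ∑_{A_{p,i}}
X_{j_1} ⋯ X_{j_{2p+1}}`, where `A_{p,i}` consists of the tuples whose alternating
sum is congruent to `2i (mod n)` (0-indexed version of `2i - 1`). -/
theorem trace_reverse_circulant_odd_pow (n p : ℕ) [NeZero n] (X : Fin n → ℝ) :
    Matrix.trace ((Matrix.of fun i j : Fin n => X (i + j) / Real.sqrt n) ^ (2 * p + 1)) =
      (1 / Real.sqrt n ^ (2 * p + 1)) *
        ∑ i : Fin n,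
          ∑ j ∈ Finset.univ.filter (fun j : Fin (2 * p + 1) → Fin n =>
              (n : ℤ) ∣ (∑ k : Fin (2 * p + 1), (-1) ^ (k : ℕ) * ((j k : ℕ) : ℤ))
                - 2 * (i : ℕ)),
            ∏ k : Fin (2 * p + 1), X (j k) := by
  have hM : (Matrix.of fun i j : Fin n => X (i + j) / Real.sqrt n)
      = (Real.sqrt n)⁻¹ • (Matrix.of fun i j : Fin n => X (i + j)) := by
    ext i j
    simp [div_eq_inv_mul]
  rw [hM, smul_pow, Matrix.trace_smul, smul_eq_mul, inv_pow, ← one_div]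
  congr 1
  rw [trace_pow_cycle]
  simp only [Matrix.of_apply]
  rw [sum_sum_filter]
  refine Finset.sum_nbij'
    (i := fun g : Fin (2 * p + 1) → Fin n => (g 0, fun k => g k + g (k + 1)))
    (j := fun x (m : Fin (2 * p + 1)) =>
      (-1 : Fin n) ^ (m : ℕ) * (x.1 - ∑ t ∈ Finset.range (m : ℕ),
        (-1) ^ t * x.2 ((t : ℕ) : Fin (2 * p + 1))))
    ?_ ?_ ?_ ?_ ?_
  · -- maps into the filtered set
    intro g _
    simp only [Finset.mem_filter, Finset.mem_univ, true_and]
    rw [cond_iff]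
    have hg1 : ∀ k : Fin (2 * p + 1), g (((k : ℕ) : Fin (2 * p + 1))) = g k := fun k => by
      rw [Fin.cast_val_eq_self]
    have hg2 : ∀ k : Fin (2 * p + 1), g ((((k : ℕ) + 1 : ℕ)) : Fin (2 * p + 1)) = g (k + 1) :=
      fun k => by congr 1; push_cast [Fin.cast_val_eq_self]; ring
    have hstep : ∑ k : Fin (2 * p + 1), (-1 : Fin n) ^ (k : ℕ) * (g k + g (k + 1))
        = ∑ k : Fin (2 * p + 1),
          (fun t : ℕ => (-1 : Fin n) ^ t * (g ((t : ℕ) : Fin (2 * p + 1))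
            + g (((t + 1 : ℕ)) : Fin (2 * p + 1)))) (k : ℕ) :=
      Finset.sum_congr rfl fun k _ => by simp only; rw [hg1 k, hg2 k]
    rw [hstep, Fin.sum_univ_eq_sum_range (fun t : ℕ => (-1 : Fin n) ^ t *
      (g ((t : ℕ) : Fin (2 * p + 1)) + g (((t + 1 : ℕ)) : Fin (2 * p + 1)))) (2 * p + 1), tele]
    have e2 : (((2 * p + 1 : ℕ)) : Fin (2 * p + 1)) = 0 := Fin.natCast_self _
    have e3 : ((-1 : Fin n)) ^ (2 * p + 1) = -1 := Odd.neg_one_pow ⟨p, by ring⟩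
    rw [e2, e3]
    push_cast
    ring
  · intro _ _
    exact Finset.mem_univ _
  · -- left inverse
    intro g _
    funext m
    simp only
    have hg2 : ∀ t : ℕ, g (((t : ℕ) : Fin (2 * p + 1)) + 1)
        = g (((t + 1 : ℕ)) : Fin (2 * p + 1)) :=
      fun t => by congr 1; push_cast; ring
    have hs : ∑ t ∈ Finset.range (m : ℕ),
          (-1 : Fin n) ^ t * (g ((t : ℕ) : Fin (2 * p + 1)) + g (((t : ℕ) : Fin (2 * p + 1)) + 1))
        = ∑ t ∈ Finset.range (m : ℕ),
          (-1 : Fin n) ^ t * (g ((t : ℕ) : Fin (2 * p + 1)) + g (((t + 1 : ℕ)) : Fin (2 * p + 1))) :=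
      Finset.sum_congr rfl fun t _ => by rw [hg2 t]
    rw [hs, tele (fun t : ℕ => g ((t : ℕ) : Fin (2 * p + 1))) (m : ℕ)]
    have hsq : ((-1 : Fin n)) ^ (m : ℕ) * (-1) ^ (m : ℕ) = 1 := by
      rw [← pow_add]; exact Even.neg_one_pow ⟨(m : ℕ), rfl⟩
    rw [Fin.cast_val_eq_self m]
    push_cast
    linear_combination g m * hsq
  · -- right inverse
    rintro ⟨i, j⟩ hx
    simp only [Finset.mem_filter, Finset.mem_univ, true_and] at hx
    rw [cond_iff] at hx
    refine Prod.ext ?_ ?_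
    · simp
    · funext k
      simp only
      by_cases hk : k = Fin.last (2 * p)
      · subst hk
        rw [Fin.last_add_one]
        have hT : ∑ t ∈ Finset.range (2 * p + 1),
            (-1 : Fin n) ^ t * j ((t : ℕ) : Fin (2 * p + 1)) = 2 * i := by
          rw [← Fin.sum_univ_eq_sum_range (fun t : ℕ =>
            (-1 : Fin n) ^ t * j ((t : ℕ) : Fin (2 * p + 1))) (2 * p + 1), ← hx]
          exact Finset.sum_congr rfl fun k _ => by rw [Fin.cast_val_eq_self]
        rw [Finset.sum_range_succ] at hT
        have h2p : (((2 * p : ℕ)) : Fin (2 * p + 1)) = Fin.last (2 * p) := by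
          ext
          rw [Fin.val_cast_of_lt (by omega)]
          simp [Fin.val_last]
        have hev : ((-1 : Fin n)) ^ (2 * p) = 1 := Even.neg_one_pow ⟨p, by ring⟩
        rw [h2p] at hT
        simp only [Fin.val_last, Fin.val_zero, pow_zero, one_mul, Finset.range_zero,
          Finset.sum_empty, sub_zero]
        linear_combination (-((-1 : Fin n) ^ (2 * p))) * hT
          + (j (Fin.last (2 * p)) * ((-1 : Fin n) ^ (2 * p) + 1) - i) * hev
      · have hlt : k < Fin.last (2 * p) := lt_of_le_of_ne (Fin.le_last k) hk
        have hk1 : ((k + 1 : Fin (2 * p + 1)) : ℕ) = (k : ℕ) + 1 := Fin.val_add_one_of_lt hlt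
        have hsq : ((-1 : Fin n)) ^ (k : ℕ) * (-1) ^ (k : ℕ) = 1 := by
          rw [← pow_add]; exact Even.neg_one_pow ⟨(k : ℕ), rfl⟩
        rw [hk1, pow_succ, Finset.sum_range_succ, Fin.cast_val_eq_self]
        linear_combination j k * hsq
  · intro g _
    rfl
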